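/- Let S be a semiring such that M_n(S) is congruence-simple for some n ≥ 2. Then S is congruence-simple, S contains no bi-absorbing element, |S·S| ≥ 2, and S is either additively idempotent or additively cancellative. -/

import Mathlib

/-- A semiring in the sense of the paper: associative `+` and `*`, `+` commutative,
`*` distributing over `+` from both sides; no zero or unity assumed. -/
class PSemiring (S : Type) extends AddCommSemigroup S, Semigroup S where
  left_distrib : ∀ a b c : S, a * (b + c) = a * b + a * c
  right_distrib : ∀ a b c : S, (a + b) * c = a * c + b * c

section Defs
variable {T : Type} [Add T] [Mul T]

def MulAbsorbing (w : T) : Prop := ∀ a : T, a * w = w ∧ w * a = w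
def AddAbsorbing (w : T) : Prop := ∀ a : T, a + w = w
def AddNeutral (w : T) : Prop := ∀ a : T, a + w = a
def BiAbsorbing (w : T) : Prop := MulAbsorbing w ∧ AddAbsorbing w
def IsZero (w : T) : Prop := MulAbsorbing w ∧ AddNeutral w
def IsUnity (w : T) : Prop := ∀ a : T, w * a = a ∧ a * w = a

def IsBiIdeal (I : Set T) : Prop :=
  I.Nonempty ∧ ∀ a ∈ I, ∀ s : T, a + s ∈ I ∧ a * s ∈ I ∧ s * a ∈ I

def IsCongruence (r : T → T → Prop) : Prop :=
  Equivalence r ∧ (∀ a b c d : T, r a b → r c d → r (a + c) (b + d)) ∧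
    (∀ a b c d : T, r a b → r c d → r (a * c) (b * d))

/-- The standard quasiordering on a semiring. -/
def leS (a b : T) : Prop := a = b ∨ ∃ c : T, a + c = b

/-- `addPow m b` is the `(m+1)`-fold sum `b + ⋯ + b`. -/
def addPow : ℕ → T → T
  | 0, b => b
  | m + 1, b => addPow m b + b

end Defs

def CongSimple (T : Type) [Add T] [Mul T] : Prop :=
  (∃ a b : T, a ≠ b) ∧
    ∀ r : T → T → Prop, IsCongruence r →
      (∀ a b : T, r a b ↔ a = b) ∨ (∀ a b : T, r a b)

def BiIdealSimple (T : Type) [Add T] [Mul T] : Prop :=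
  (∃ a b : T, a ≠ b) ∧
    ∀ I : Set T, IsBiIdeal I → (∃ w : T, I = {w}) ∨ I = Set.univ

def BiIdealFree (T : Type) [Add T] [Mul T] : Prop :=
  (∃ a b : T, a ≠ b) ∧ ∀ I : Set T, IsBiIdeal I → I = Set.univ

/-- Sum of a nonempty family indexed by `Fin (n+1)`. -/
def finSum {S : Type} [Add S] : ∀ {n : ℕ}, (Fin (n + 1) → S) → S
  | 0, f => f 0
  | n + 1, f => finSum (fun i : Fin (n + 1) => f i.castSucc) + f (Fin.last (n + 1))

/-- `Mat n S` is the semiring of `(n+1) × (n+1)` matrices over `S`. -/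
structure Mat (n : ℕ) (S : Type) where
  entry : Fin (n + 1) → Fin (n + 1) → S

instance {n : ℕ} {S : Type} [Add S] : Add (Mat n S) :=
  ⟨fun A B => ⟨fun i j => A.entry i j + B.entry i j⟩⟩

instance {n : ℕ} {S : Type} [Add S] [Mul S] : Mul (Mat n S) :=
  ⟨fun A B => ⟨fun i j => finSum (fun k => A.entry i k * B.entry k j)⟩⟩

/-- The constant matrix `ā`. -/
def Mat.const (n : ℕ) {S : Type} (a : S) : Mat n S := ⟨fun _ _ => a⟩

/-!
Congruences of `S` lift entrywise to matrices. A bi-absorbing `w ∈ S` would make the matrices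
equal to `w` off the `(0, 0)` corner a bi-ideal that is neither a singleton nor everything, and if
all products in `S` coincide, agreeing at `(0, 0)` is already a congruence of matrices.

The dichotomy happens inside `S`: simplicity is applied to the kernels of `x ↦ k x` and of
`x ↦ x + w` (`w` multiplicatively absorbing), to the cancellation congruence, and to the symmetric
cores of the preorders `a ≤ b` and `a ≤ k b` (some `k`). A constant multiple or a total `≤`
forces cancellativity. Otherwise, if every `a` is below a multiple of every `b`, some `a + w` is an
additively absorbing top equal to some `k a`; then `k (a + a) = k a`, and injectivity of `x ↦ k x`
gives `a + a = a`.
-/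

section CompatiblePreorder
variable {T : Type} [Add T] [Mul T]

structure IsCompatiblePreorder (R : T → T → Prop) : Prop where
  refl : ∀ a, R a a
  trans : ∀ {a b c}, R a b → R b c → R a c
  add : ∀ {a b c d}, R a b → R c d → R (a + c) (b + d)
  mul : ∀ {a b c d}, R a b → R c d → R (a * c) (b * d)

theorem IsCompatiblePreorder.isCongruence_antisymm {R : T → T → Prop}
    (hR : IsCompatiblePreorder R) : IsCongruence fun a b => R a b ∧ R b a :=
  ⟨⟨fun a => ⟨hR.refl a, hR.refl a⟩, fun h => ⟨h.2, h.1⟩,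
      fun h₁ h₂ => ⟨hR.trans h₁.1 h₂.1, hR.trans h₂.2 h₁.2⟩⟩,
    fun _ _ _ _ h₁ h₂ => ⟨hR.add h₁.1 h₂.1, hR.add h₁.2 h₂.2⟩,
    fun _ _ _ _ h₁ h₂ => ⟨hR.mul h₁.1 h₂.1, hR.mul h₁.2 h₂.2⟩⟩

end CompatiblePreorder

section Congruence
variable {T : Type} [AddCommMagma T] [Mul T]

theorem isCongruence_of_translations {r : T → T → Prop} (hr : Equivalence r)
    (hadd : ∀ {a b} c, r a b → r (a + c) (b + c))
    (hmul_right : ∀ {a b} c, r a b → r (a * c) (b * c))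
    (hmul_left : ∀ {a b} c, r a b → r (c * a) (c * b)) : IsCongruence r := by
  refine ⟨hr, fun a b c d hab hcd => hr.trans (hadd c hab) ?_,
    fun a b c d hab hcd => hr.trans (hmul_right c hab) (hmul_left b hcd)⟩
  rw [add_comm b c, add_comm b d]
  exact hadd b hcd

theorem isCongruence_rees {I : Set T} (hI : IsBiIdeal I) :
    IsCongruence fun a b => a = b ∨ (a ∈ I ∧ b ∈ I) := by
  refine isCongruence_of_translations ⟨fun a => Or.inl rfl, ?_, ?_⟩ ?_ ?_ ?_
  · rintro a b (rfl | ⟨ha, hb⟩)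
    exacts [Or.inl rfl, Or.inr ⟨hb, ha⟩]
  · rintro a b c (rfl | ⟨ha, hb⟩) (rfl | ⟨hb', hc⟩)
    exacts [Or.inl rfl, Or.inr ⟨hb', hc⟩, Or.inr ⟨ha, hb⟩, Or.inr ⟨ha, hc⟩]
  · rintro a b c (rfl | ⟨ha, hb⟩)
    exacts [Or.inl rfl, Or.inr ⟨(hI.2 a ha c).1, (hI.2 b hb c).1⟩]
  · rintro a b c (rfl | ⟨ha, hb⟩)
    exacts [Or.inl rfl, Or.inr ⟨(hI.2 a ha c).2.1, (hI.2 b hb c).2.1⟩]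
  · rintro a b c (rfl | ⟨ha, hb⟩)
    exacts [Or.inl rfl, Or.inr ⟨(hI.2 a ha c).2.2, (hI.2 b hb c).2.2⟩]

theorem CongSimple.biIdealSimple (h : CongSimple T) : BiIdealSimple T := by
  refine ⟨h.1, fun I hI => ?_⟩
  obtain ⟨w, hw⟩ := hI.1
  rcases h.2 _ (isCongruence_rees hI) with hid | hfull
  · exact Or.inl ⟨w, Set.eq_singleton_iff_unique_mem.2
      ⟨hw, fun a ha => (hid a w).1 (Or.inr ⟨ha, hw⟩)⟩⟩
  · refine Or.inr (Set.eq_univ_of_forall fun a => ?_)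
    rcases hfull a w with rfl | ⟨ha, -⟩
    exacts [hw, ha]

end Congruence

section PSemiring
variable {S : Type} [PSemiring S]

local instance : Distrib S where
  left_distrib := PSemiring.left_distrib
  right_distrib := PSemiring.right_distrib

theorem addPow_add (m : ℕ) (a b : S) : addPow m (a + b) = addPow m a + addPow m b := by
  induction m with
  | zero => rfl
  | succ m ih =>
    simp only [addPow, ih]
    exact add_add_add_comm _ _ _ _

theorem addPow_add_addPow (m k : ℕ) (a : S) :
    addPow m a + addPow k a = addPow (m + k + 1) a := by
  induction k with
  | zero => rfl
  | succ k ih => rw [addPow, ← add_assoc, ih]; rfl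

theorem addPow_mul (m : ℕ) (a c : S) : addPow m a * c = addPow m (a * c) := by
  induction m with
  | zero => rfl
  | succ m ih => rw [addPow, add_mul, ih]; rfl

theorem mul_addPow (m : ℕ) (a c : S) : c * addPow m a = addPow m (c * a) := by
  induction m with
  | zero => rfl
  | succ m ih => rw [addPow, mul_add, ih]; rfl

theorem addPow_addPow (l k : ℕ) (a : S) : addPow l (addPow k a) = addPow (l * k + l + k) a := by
  induction l with
  | zero => simp only [addPow, zero_mul, zero_add]
  | succ l ih =>
    rw [addPow, ih, addPow_add_addPow]
    congr 1
    ring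

theorem add_addPow_eq_of_add_eq {x y z : S} (h : x + z = y + z) (k : ℕ) :
    x + addPow k z = y + addPow k z := by
  induction k with
  | zero => exact h
  | succ k ih => rw [addPow, ← add_assoc, ih, add_assoc]

theorem addPow_add_eq_of_add_self_add {a w : S} (h : a + a + w = a + w) (k : ℕ) :
    addPow k a + w = a + w := by
  induction k with
  | zero => rfl
  | succ k ih => rw [addPow, add_right_comm, ih, add_right_comm, h]

theorem isCongruence_exists_add_eq : IsCongruence fun a b : S => ∃ x, a + x = b + x := by
  refine isCongruence_of_translations
    ⟨fun a => ⟨a, rfl⟩, fun ⟨x, hx⟩ => ⟨x, hx.symm⟩, ?_⟩ ?_ ?_ ?_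
  · rintro a b c ⟨x, hx⟩ ⟨y, hy⟩
    exact ⟨x + y, by rw [← add_assoc, hx, add_right_comm, hy, add_right_comm, add_assoc]⟩
  · rintro a b c ⟨x, hx⟩
    exact ⟨x, by rw [add_right_comm, hx, add_right_comm]⟩
  · rintro a b c ⟨x, hx⟩
    exact ⟨x * c, by rw [← add_mul, hx, add_mul]⟩
  · rintro a b c ⟨x, hx⟩
    exact ⟨c * x, by rw [← mul_add, hx, mul_add]⟩

theorem isCongruence_addPow_eq (m : ℕ) : IsCongruence fun a b : S => addPow m a = addPow m b :=
  isCongruence_of_translations ⟨fun _ => rfl, Eq.symm, Eq.trans⟩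
    (fun c h => by rw [addPow_add, h, addPow_add])
    (fun c h => by rw [← addPow_mul, h, addPow_mul])
    (fun c h => by rw [← mul_addPow, h, mul_addPow])

theorem isCongruence_add_eq_add {w : S} (hw : MulAbsorbing w) :
    IsCongruence fun a b : S => a + w = b + w :=
  isCongruence_of_translations ⟨fun _ => rfl, Eq.symm, Eq.trans⟩
    (fun c h => by rw [add_right_comm, h, add_right_comm])
    (fun c h => by rw [← (hw c).2, ← add_mul, h, add_mul])
    (fun c h => by rw [← (hw c).1, ← mul_add, h, mul_add])

theorem leS_add_right (a c : S) : leS a (a + c) := Or.inr ⟨c, rfl⟩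

theorem leS_trans {a b c : S} (hab : leS a b) (hbc : leS b c) : leS a c := by
  rcases hab with rfl | ⟨x, rfl⟩
  · exact hbc
  rcases hbc with rfl | ⟨y, rfl⟩
  · exact leS_add_right a x
  · exact Or.inr ⟨x + y, by rw [add_assoc]⟩

theorem leS_add {a b c d : S} (hab : leS a b) (hcd : leS c d) : leS (a + c) (b + d) := by
  rcases hab with rfl | ⟨x, rfl⟩ <;> rcases hcd with rfl | ⟨y, rfl⟩
  · exact Or.inl rfl
  · exact Or.inr ⟨y, by rw [add_assoc]⟩
  · exact Or.inr ⟨x, by rw [add_right_comm]⟩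
  · exact Or.inr ⟨x + y, by rw [add_add_add_comm]⟩

theorem leS_mul {a b c d : S} (hab : leS a b) (hcd : leS c d) : leS (a * c) (b * d) := by
  refine leS_trans (b := b * c) ?_ ?_
  · rcases hab with rfl | ⟨x, rfl⟩
    exacts [Or.inl rfl, Or.inr ⟨x * c, (add_mul _ _ _).symm⟩]
  · rcases hcd with rfl | ⟨y, rfl⟩
    exacts [Or.inl rfl, Or.inr ⟨b * y, (mul_add _ _ _).symm⟩]

theorem leS_addPow {a b : S} (h : leS a b) (m : ℕ) : leS (addPow m a) (addPow m b) := by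
  induction m with
  | zero => exact h
  | succ m ih => exact leS_add ih h

theorem leS_addPow_of_le (a : S) {m k : ℕ} (h : m ≤ k) : leS (addPow m a) (addPow k a) := by
  obtain ⟨r, rfl⟩ := Nat.exists_eq_add_of_le h
  cases r with
  | zero => exact Or.inl rfl
  | succ r => exact Or.inr ⟨addPow r a, addPow_add_addPow m r a⟩

theorem isCompatiblePreorder_leS : IsCompatiblePreorder (leS : S → S → Prop) :=
  ⟨fun _ => Or.inl rfl, leS_trans, leS_add, leS_mul⟩

def ArchLe (a b : S) : Prop := ∃ m, leS a (addPow m b)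

theorem isCompatiblePreorder_archLe : IsCompatiblePreorder (ArchLe : S → S → Prop) where
  refl a := ⟨0, Or.inl rfl⟩
  trans := by
    rintro a b c ⟨m, hm⟩ ⟨k, hk⟩
    exact ⟨m * k + m + k, addPow_addPow m k c ▸ leS_trans hm (leS_addPow hk m)⟩
  add := by
    rintro a b c d ⟨m, hm⟩ ⟨k, hk⟩
    refine ⟨m + k, addPow_add (m + k) b d ▸ leS_trans (leS_add hm hk) (leS_add ?_ ?_)⟩
    exacts [leS_addPow_of_le b (Nat.le_add_right m k), leS_addPow_of_le d (Nat.le_add_left k m)]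
  mul := by
    rintro a b c d ⟨m, hm⟩ ⟨k, hk⟩
    refine ⟨m * k + m + k, leS_trans (leS_mul hm hk) ?_⟩
    rw [addPow_mul, mul_addPow, addPow_addPow]
    exact Or.inl rfl

theorem addCancel_of_addPow_const (hS : CongSimple S) (hNB : ¬∃ w : S, BiAbsorbing w) (m : ℕ)
    (hm : ∀ x y : S, addPow m x = addPow m y) : ∀ x y z : S, x + z = y + z → x = y := by
  intro x y z hxyz
  set w := addPow m z
  have hw : MulAbsorbing w := fun c =>
    ⟨by rw [mul_addPow]; exact hm _ _, by rw [addPow_mul]; exact hm _ _⟩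
  rcases hS.2 _ (isCongruence_add_eq_add hw) with hid | hfull
  · exact (hid x y).1 (add_addPow_eq_of_add_eq hxyz m)
  · have hww : w + w = w := by rw [← addPow_add]; exact hm _ _
    exact absurd ⟨w, hw, fun a => (hfull a w).trans hww⟩ hNB

theorem addCancel_of_leS_total (h : ∀ a b : S, leS a b) :
    ∀ x y z : S, x + z = y + z → x = y := by
  intro x y z hxyz
  -- `z + z ≤ z` yields an idempotent `z + d`; totality makes it neutral, and `d` inverts `z`.
  obtain ⟨d, hv⟩ : ∃ d, z + d + (z + d) = z + d := by
    rcases h (z + z) z with hzz | ⟨e, he⟩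
    · exact ⟨z, by rw [hzz, hzz]⟩
    · exact ⟨e, by rw [add_add_add_comm, ← add_assoc, he]⟩
  have hneutral : ∀ y, y + (z + d) = y := fun y => by
    rcases h (z + d) y with rfl | ⟨c, rfl⟩
    · exact hv
    · rw [add_right_comm, hv]
  rw [← hneutral x, ← hneutral y, ← add_assoc, hxyz, add_assoc]

theorem add_self_of_archLe_total (hinj : ∀ m, Function.Injective (addPow m : S → S))
    (hanti : ∀ a b : S, leS a b → leS b a → a = b) (hc : ∀ a b : S, ∃ x, a + x = b + x)
    (harch : ∀ a b : S, ArchLe a b) (a : S) : a + a = a := by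
  obtain ⟨w, hw⟩ := hc (a + a) a
  have htop : ∀ b, leS b (a + w) := fun b => by
    obtain ⟨m, hm⟩ := harch b a
    exact leS_trans hm (addPow_add_eq_of_add_self_add hw m ▸ leS_add_right _ w)
  have habs : ∀ s, a + w + s = a + w := fun s =>
    hanti _ _ (htop _) (leS_add_right _ s)
  obtain ⟨m, hm⟩ := harch (a + w) a
  have hma : addPow m a = a + w := by
    rcases hm with h | ⟨z, hz⟩
    exacts [h.symm, hz.symm.trans (habs z)]
  exact hinj m (by rw [addPow_add, hma, habs])

theorem CongSimple.addIdem_or_addCancel (hS : CongSimple S) (hNB : ¬∃ w : S, BiAbsorbing w) :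
    (∀ a : S, a + a = a) ∨ ∀ a b c : S, a + c = b + c → a = b := by
  by_cases hcancel : ∀ a b c : S, a + c = b + c → a = b
  · exact Or.inr hcancel
  have hinj : ∀ m, Function.Injective (addPow m : S → S) := fun m x y hxy =>
    (hS.2 _ (isCongruence_addPow_eq m)).elim (fun hid => (hid x y).1 hxy)
      fun hfull => absurd (addCancel_of_addPow_const hS hNB m hfull) hcancel
  have hc : ∀ a b : S, ∃ x, a + x = b + x :=
    (hS.2 _ isCongruence_exists_add_eq).resolve_left fun hid =>
      hcancel fun a b c h => (hid a b).1 ⟨c, h⟩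
  have hanti : ∀ a b : S, leS a b → leS b a → a = b :=
    (hS.2 _ isCompatiblePreorder_leS.isCongruence_antisymm).elim
      (fun hid a b hab hba => (hid a b).1 ⟨hab, hba⟩)
      fun hfull => absurd (addCancel_of_leS_total fun a b => (hfull a b).1) hcancel
  refine Or.inl fun a => ?_
  rcases hS.2 _ isCompatiblePreorder_archLe.isCongruence_antisymm with hid | hfull
  · exact (hid _ _).1 ⟨⟨1, Or.inl rfl⟩, ⟨0, leS_add_right a a⟩⟩
  · exact add_self_of_archLe_total hinj hanti hc (fun a b => (hfull a b).1) a

end PSemiring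

theorem finSum_rel {S : Type} [Add S] {r : S → S → Prop}
    (hr : ∀ a b c d, r a b → r c d → r (a + c) (b + d)) :
    ∀ {n : ℕ} {f g : Fin (n + 1) → S}, (∀ k, r (f k) (g k)) → r (finSum f) (finSum g)
  | 0, _, _, h => h 0
  | _ + 1, _, _, h => hr _ _ _ _ (finSum_rel hr fun k => h k.castSucc) (h (Fin.last _))

theorem finSum_eq_of_addAbsorbing {S : Type} [AddCommMagma S] {w : S} (hw : AddAbsorbing w) :
    ∀ {n : ℕ} (f : Fin (n + 1) → S) (k : Fin (n + 1)), f k = w → finSum f = w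
  | 0, f, k, hk => (congrArg f (Fin.fin_one_eq_zero k)).symm.trans hk
  | _ + 1, f, k, hk => by
    show finSum _ + _ = w
    induction k using Fin.lastCases with
    | last => rw [hk]; exact hw _
    | cast k => rw [finSum_eq_of_addAbsorbing hw _ k hk, add_comm]; exact hw _

attribute [ext] Mat

namespace Mat
variable {n : ℕ} {S : Type}

@[simp]
theorem add_entry [Add S] (A B : Mat n S) (i j : Fin (n + 1)) :
    (A + B).entry i j = A.entry i j + B.entry i j := rfl

@[simp]
theorem mul_entry [Add S] [Mul S] (A B : Mat n S) (i j : Fin (n + 1)) :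
    (A * B).entry i j = finSum fun k => A.entry i k * B.entry k j := rfl

@[simp]
theorem const_entry (a : S) (i j : Fin (n + 1)) : (Mat.const n a).entry i j = a := rfl

instance [AddCommMagma S] : AddCommMagma (Mat n S) where
  add_comm A B := by ext i j; exact add_comm _ _

def corner (n : ℕ) (a b : S) : Mat n S := ⟨fun i j => if i = 0 ∧ j = 0 then a else b⟩

@[simp]
theorem corner_entry_zero_zero (a b : S) : (corner n a b).entry 0 0 = a := by
  simp [corner]

theorem corner_entry_of_ne {a b : S} {i j : Fin (n + 1)} (hij : i ≠ 0 ∨ j ≠ 0) :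
    (corner n a b).entry i j = b :=
  if_neg fun h => hij.elim (· h.1) (· h.2)

def liftRel (r : S → S → Prop) (A B : Mat n S) : Prop := ∀ i j, r (A.entry i j) (B.entry i j)

theorem isCongruence_liftRel [Add S] [Mul S] {r : S → S → Prop} (hr : IsCongruence r) :
    IsCongruence (liftRel (n := n) r) :=
  ⟨⟨fun _ _ _ => hr.1.refl _, fun h i j => hr.1.symm (h i j),
      fun h₁ h₂ i j => hr.1.trans (h₁ i j) (h₂ i j)⟩,
    fun _ _ _ _ h₁ h₂ i j => hr.2.1 _ _ _ _ (h₁ i j) (h₂ i j),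
    fun _ _ _ _ h₁ h₂ i j => finSum_rel hr.2.1 fun k => hr.2.2 _ _ _ _ (h₁ i k) (h₂ k j)⟩

def cornerIdeal (n : ℕ) (w : S) : Set (Mat n S) :=
  {A | ∀ i j, i ≠ 0 ∨ j ≠ 0 → A.entry i j = w}

theorem corner_mem_cornerIdeal (a w : S) : corner n a w ∈ cornerIdeal n w :=
  fun _ _ => corner_entry_of_ne

theorem isBiIdeal_cornerIdeal [AddCommMagma S] [Mul S] {w : S} (hw : BiAbsorbing w) :
    IsBiIdeal (cornerIdeal (n + 1) w) := by
  refine ⟨⟨const _ w, fun _ _ _ => rfl⟩, fun A hA C => ⟨?_, ?_, ?_⟩⟩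
  · intro i j hij
    rw [add_entry, hA i j hij, add_comm]
    exact hw.2 _
  · intro i j _
    refine finSum_eq_of_addAbsorbing hw.2 _ 1 ?_
    rw [hA i 1 (Or.inr one_ne_zero)]
    exact (hw.1 _).2
  · intro i j _
    refine finSum_eq_of_addAbsorbing hw.2 _ 1 ?_
    rw [hA 1 j (Or.inl one_ne_zero)]
    exact (hw.1 _).1

end Mat

theorem congSimple_of_congSimple_mat {S : Type} [Add S] [Mul S] {n : ℕ}
    (h : CongSimple (Mat n S)) : CongSimple S := by
  refine ⟨?_, fun r hr => ?_⟩
  · obtain ⟨A, B, hAB⟩ := h.1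
    by_contra! hall
    exact hAB (Mat.ext (funext₂ fun i j => hall _ _))
  rcases h.2 _ (Mat.isCongruence_liftRel hr) with hid | hfull
  · refine Or.inl fun a b => ⟨fun hab => ?_, fun hab => hab ▸ hr.1.refl a⟩
    have hconst := (hid (Mat.const n a) (Mat.const n b)).1 fun _ _ => hab
    simpa using congrArg (Mat.entry · 0 0) hconst
  · exact Or.inr fun a b => hfull (Mat.const n a) (Mat.const n b) 0 0

theorem not_exists_biAbsorbing_of_congSimple_mat {S : Type} [AddCommMagma S] [Mul S] {n : ℕ}
    (h : CongSimple (Mat (n + 1) S)) : ¬∃ w : S, BiAbsorbing w := by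
  rintro ⟨w, hw⟩
  obtain ⟨s, t, hst⟩ := (congSimple_of_congSimple_mat h).1
  rcases h.biIdealSimple.2 _ (Mat.isBiIdeal_cornerIdeal hw) with ⟨A, hA⟩ | huniv
  · have hs := Mat.corner_mem_cornerIdeal (n := n + 1) s w
    have ht := Mat.corner_mem_cornerIdeal (n := n + 1) t w
    rw [hA] at hs ht
    exact hst (by simpa using congrArg (Mat.entry · 0 0) (hs.trans ht.symm))
  · have hs : Mat.const (n + 1) s ∈ Mat.cornerIdeal (n + 1) w := huniv ▸ Set.mem_univ _
    have ht : Mat.const (n + 1) t ∈ Mat.cornerIdeal (n + 1) w := huniv ▸ Set.mem_univ _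
    exact hst ((hs 0 1 (Or.inr one_ne_zero)).trans (ht 0 1 (Or.inr one_ne_zero)).symm)

theorem exists_mul_ne_of_congSimple_mat {S : Type} [Add S] [Mul S] {n : ℕ}
    (h : CongSimple (Mat (n + 1) S)) : ∃ a b c d : S, a * b ≠ c * d := by
  obtain ⟨s, t, hst⟩ := (congSimple_of_congSimple_mat h).1
  by_contra! hconst
  -- All matrix products coincide as well, so agreeing at `(0, 0)` is a congruence.
  have hcong : IsCongruence fun A B : Mat (n + 1) S => A.entry 0 0 = B.entry 0 0 :=
    ⟨⟨fun _ => rfl, Eq.symm, Eq.trans⟩,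
      fun _ _ _ _ h₁ h₂ => by simp only [Mat.add_entry, h₁, h₂],
      fun _ _ _ _ _ _ => by
        simp only [Mat.mul_entry]
        exact congrArg finSum (funext fun _ => hconst _ _ _ _)⟩
  rcases h.2 _ hcong with hid | hfull
  · have hcorner := congrArg (Mat.entry · 0 1)
      ((hid (Mat.corner (n + 1) s t) (Mat.const (n + 1) s)).1 (by simp))
    rw [Mat.corner_entry_of_ne (Or.inr one_ne_zero)] at hcorner
    exact hst hcorner.symm
  · exact hst (hfull (Mat.const (n + 1) s) (Mat.const (n + 1) t))

/-- if `M_n(S)` is congruence-simple for some `n ≥ 2` (`Mat (n+1)` has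
size `n+2`), then `S` is congruence-simple, has no bi-absorbing element, `|S·S| ≥ 2`,
and `S` is additively idempotent or additively cancellative. -/
theorem stmt8 {S : Type} [PSemiring S] (n : ℕ)
    (h : CongSimple (Mat (n + 1) S)) :
    CongSimple S ∧ (¬∃ w : S, BiAbsorbing w) ∧ (∃ a b c d : S, a * b ≠ c * d) ∧
      ((∀ a : S, a + a = a) ∨ ∀ a b c : S, a + c = b + c → a = b) := by
  have hS : CongSimple S := congSimple_of_congSimple_mat h
  have hNB : ¬∃ w : S, BiAbsorbing w := not_exists_biAbsorbing_of_congSimple_mat h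
  exact ⟨hS, hNB, exists_mul_ne_of_congSimple_mat h, hS.addIdem_or_addCancel hNB⟩
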